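/- Let a > 0, M ≥ 1, and let g_0,…,g_{M−1}, θ_0,…,θ_{M−1} be real numbers satisfying the compatibility conditions Σ_k g_k e^{−iθ_k} = 0 and Σ_k g_k e^{−2iθ_k} = 0. Let r > 0 and θ ∈ ℝ be such that a(2πj + θ_k − θ) + ln r ≠ 0 for every j ∈ ℤ and every k (i.e. the point r e^{iθ} lies off all the spirals). Then the denominators r − e^{(a+i)σ + i(θ_k−θ)} never vanish for σ ∈ ℝ, and the function f(σ) := Σ_{k=0}^{M−1} g_k e^{2aσ}/( r − e^{(a+i)σ + i(θ_k−θ)} ) is Bochner integrable on ℝ. -/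

import Mathlib

/-!
Write `z = e^{(a+i)σ + iφ}`, so `|z| = e^{aσ}`. If `r = z`, then `aσ = log r` and `σ + φ ∈ 2πℤ`,
which the off-spiral condition excludes; hence the integrand is continuous. As `σ → -∞`, `z → 0`
and every term is `O(e^{2aσ})`. As `σ → +∞` the terms only grow like `e^{aσ}`, but
`1/(r - z) = -1/z - r/z² + r²/(z²(r - z))`, and after summing over `k` the first two parts cancel
by the two compatibility conditions, since `1/z_k ∝ e^{-iθ_k}` and `1/z_k² ∝ e^{-2iθ_k}`. The
remainder is `O(e^{-aσ})`.
-/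

open Complex Filter Asymptotics MeasureTheory Set Topology

theorem sum_div_sub_eq_of_sum_div_pow_eq_zero {ι K : Type*} [Field K] (s : Finset ι)
    (c z : ι → K) (r : K) (hz : ∀ k ∈ s, z k ≠ 0) (hd : ∀ k ∈ s, r - z k ≠ 0)
    (h1 : ∑ k ∈ s, c k / z k = 0) (h2 : ∑ k ∈ s, c k / z k ^ 2 = 0) :
    ∑ k ∈ s, c k / (r - z k) = ∑ k ∈ s, c k * r ^ 2 / (z k ^ 2 * (r - z k)) := by
  have hterm : ∀ k ∈ s, c k / (r - z k) =
      c k * r ^ 2 / (z k ^ 2 * (r - z k)) - c k / z k - r * (c k / z k ^ 2) := by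
    intro k hk
    field_simp [hz k hk, hd k hk]
    ring
  rw [Finset.sum_congr rfl hterm, Finset.sum_sub_distrib, Finset.sum_sub_distrib, h1,
    ← Finset.mul_sum, h2, mul_zero, sub_zero, sub_zero]

theorem sum_mul_div_exp_pow_eq_zero {ι : Type*} (s : Finset ι) (c φ : ι → ℂ) (n : ℕ)
    (hc : ∑ k ∈ s, c k * exp (-n * I * φ k) = 0) (e w : ℂ) :
    ∑ k ∈ s, c k * e / exp (w + I * φ k) ^ n = 0 := by
  have hterm : ∀ k, c k * e / exp (w + I * φ k) ^ n =
      e * exp (-n * w) * (c k * exp (-n * I * φ k)) := by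
    intro k
    rw [← exp_nat_mul, div_eq_mul_inv, ← exp_neg,
      show -(n * (w + I * φ k)) = -n * w + -n * I * φ k by ring, exp_add]
    ring
  simp_rw [hterm, ← Finset.mul_sum, hc, mul_zero]

section Spiral

variable {a r : ℝ} (φ : ℝ)

theorem norm_exp_spiral (σ : ℝ) : ‖exp ((a + I) * σ + I * φ)‖ = Real.exp (a * σ) := by
  simp [norm_exp]

theorem ofReal_sub_exp_spiral_ne_zero (hr : 0 < r)
    (hoff : ∀ j : ℤ, a * (2 * Real.pi * j + φ) + Real.log r ≠ 0) (σ : ℝ) :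
    (r : ℂ) - exp ((a + I) * σ + I * φ) ≠ 0 := by
  intro h
  rw [sub_eq_zero, ← Real.exp_log hr, ofReal_exp, exp_eq_exp_iff_exists_int] at h
  obtain ⟨n, hn⟩ := h
  have hre := congrArg re hn
  have him := congrArg im hn
  simp only [ofReal_re, add_re, mul_re, I_re, add_zero, add_im, ofReal_im, I_im, zero_add,
    mul_zero, sub_zero, zero_mul, sub_self, intCast_re, re_ofNat, im_ofNat, mul_im, mul_one,
    intCast_im, one_mul] at hre him
  exact hoff n (by linear_combination hre - a * him)

theorem sub_le_norm_ofReal_sub_exp_spiral (σ : ℝ) :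
    Real.exp (a * σ) - |r| ≤ ‖(r : ℂ) - exp ((a + I) * σ + I * φ)‖ := by
  simpa [norm_exp_spiral, norm_sub_rev] using norm_sub_norm_le (exp ((a + I) * σ + I * φ)) r

theorem tendsto_exp_spiral_atBot (ha : 0 < a) :
    Tendsto (fun σ : ℝ => exp ((a + I) * σ + I * φ)) atBot (𝓝 0) := by
  rw [tendsto_zero_iff_norm_tendsto_zero]
  simp_rw [norm_exp_spiral]
  exact Real.tendsto_exp_atBot.comp (tendsto_id.const_mul_atBot ha)

theorem isBigO_atBot_mul_exp_div_sub_exp_spiral (ha : 0 < a) (hr : r ≠ 0) (c : ℂ) :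
    (fun σ : ℝ => c * exp (2 * a * σ) / (r - exp ((a + I) * σ + I * φ)))
      =O[atBot] fun σ => Real.exp (2 * a * σ) := by
  have hinv : (fun σ : ℝ => ((r : ℂ) - exp ((a + I) * σ + I * φ))⁻¹) =O[atBot] fun _ => (1 : ℝ) :=
    ((tendsto_const_nhds.sub (tendsto_exp_spiral_atBot φ ha)).inv₀
      (by simpa using hr)).isBigO_one ℝ
  have hexp : (fun σ : ℝ => c * exp (2 * a * σ)) =O[atBot] fun σ => Real.exp (2 * a * σ) :=
    IsBigO.of_bound ‖c‖ (Eventually.of_forall fun σ => by simp [norm_exp])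
  simpa [div_eq_mul_inv] using hexp.mul hinv

theorem isBigO_atTop_mul_exp_div_sq_mul_sub_exp_spiral (ha : 0 < a) (c : ℂ) :
    (fun σ : ℝ => c * exp (2 * a * σ) * r ^ 2 /
        (exp ((a + I) * σ + I * φ) ^ 2 * (r - exp ((a + I) * σ + I * φ))))
      =O[atTop] fun σ => Real.exp (-a * σ) := by
  refine IsBigO.of_bound (2 * ‖c‖ * r ^ 2) ?_
  filter_upwards [(Real.tendsto_exp_atTop.comp (tendsto_id.const_mul_atTop ha)).eventually_ge_atTop
    (2 * |r|)] with σ hσ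
  have hd := sub_le_norm_ofReal_sub_exp_spiral (a := a) (r := r) φ σ
  simp only [Function.comp_apply, id] at hσ
  have h2 : Real.exp (2 * a * σ) = Real.exp (a * σ) ^ 2 := by
    rw [← Real.exp_nat_mul]; ring_nf
  rw [norm_div, norm_mul, norm_mul, norm_mul, norm_pow, norm_pow, norm_exp_spiral, norm_real,
    Real.norm_eq_abs, sq_abs, Real.norm_of_nonneg (Real.exp_pos _).le, neg_mul, Real.exp_neg]
  simp only [norm_exp, mul_re, re_ofNat, ofReal_re, im_ofNat, ofReal_im, mul_im, mul_zero,
    zero_mul, sub_zero, add_zero, h2]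
  calc ‖c‖ * Real.exp (a * σ) ^ 2 * r ^ 2 /
        (Real.exp (a * σ) ^ 2 * ‖(r : ℂ) - exp ((a + I) * σ + I * φ)‖)
      = ‖c‖ * r ^ 2 / ‖(r : ℂ) - exp ((a + I) * σ + I * φ)‖ := by
        field_simp
    _ ≤ ‖c‖ * r ^ 2 / (Real.exp (a * σ) / 2) := by
        gcongr
        linarith [abs_nonneg r]
    _ = 2 * ‖c‖ * r ^ 2 * (Real.exp (a * σ))⁻¹ := by
        field_simp

end Spiral

theorem integrand_integrable (a : ℝ) (ha : 0 < a) (M : ℕ)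
    (g θs : Fin M → ℝ)
    (hc1 : ∑ k : Fin M, (g k : ℂ) * Complex.exp (-Complex.I * (θs k : ℂ)) = 0)
    (hc2 : ∑ k : Fin M, (g k : ℂ) * Complex.exp (-2 * Complex.I * (θs k : ℂ)) = 0)
    (r θ : ℝ) (hr : 0 < r)
    (hoff : ∀ (j : ℤ) (k : Fin M), a * (2 * Real.pi * (j : ℝ) + θs k - θ) + Real.log r ≠ 0) :
    (∀ (k : Fin M) (σ : ℝ),
      (r : ℂ) - Complex.exp (((a : ℂ) + Complex.I) * (σ : ℂ) +
        Complex.I * ((θs k : ℂ) - (θ : ℂ))) ≠ 0) ∧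
    MeasureTheory.Integrable
      (fun σ : ℝ => ∑ k : Fin M, (g k : ℂ) * Complex.exp (2 * (a : ℂ) * (σ : ℂ)) /
        ((r : ℂ) - Complex.exp (((a : ℂ) + Complex.I) * (σ : ℂ) +
          Complex.I * ((θs k : ℂ) - (θ : ℂ))))) := by
  have hden : ∀ (k : Fin M) (σ : ℝ),
      (r : ℂ) - exp ((a + I) * σ + I * (θs k - θ)) ≠ 0 := fun k σ => by
    simpa using ofReal_sub_exp_spiral_ne_zero (θs k - θ) hr
      (fun j => by simpa [add_sub_assoc] using hoff j k) σ
  refine ⟨hden, ?_⟩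
  have hphase : ∀ (k : Fin M) (σ : ℝ),
      (a + I) * σ + I * (θs k - θ) = ((a + I) * σ - I * θ) + I * θs k := fun _ _ => by ring
  have hpartial : (fun σ : ℝ => ∑ k, (g k : ℂ) * exp (2 * a * σ) /
      ((r : ℂ) - exp ((a + I) * σ + I * (θs k - θ)))) = fun σ : ℝ => ∑ k,
        (g k : ℂ) * exp (2 * a * σ) * r ^ 2 / (exp ((a + I) * σ + I * (θs k - θ)) ^ 2 *
          ((r : ℂ) - exp ((a + I) * σ + I * (θs k - θ)))) := by
    funext σ
    refine sum_div_sub_eq_of_sum_div_pow_eq_zero _ _ _ _ (fun k _ => exp_ne_zero _)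
      (fun k _ => hden k σ) ?_ ?_
    · simpa [hphase] using sum_mul_div_exp_pow_eq_zero _ _ _ 1 (by simpa using hc1) _ _
    · simpa [hphase] using sum_mul_div_exp_pow_eq_zero _ _ _ 2 (by simpa using hc2) _ _
  refine (Continuous.locallyIntegrable ?_).integrable_of_isBigO_atBot_atTop
    (g := fun σ => Real.exp (2 * a * σ)) (g' := fun σ => Real.exp (-a * σ)) ?_
    ⟨Iic 0, Iic_mem_atBot 0, integrableOn_exp_mul_Iic (by positivity) 0⟩ ?_
    ⟨Ioi 0, Ioi_mem_atTop 0, integrableOn_exp_mul_Ioi (by linarith) 0⟩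
  · fun_prop (disch := exact hden _)
  · exact IsBigO.fun_sum fun k _ => by
      simpa using isBigO_atBot_mul_exp_div_sub_exp_spiral (θs k - θ) ha hr.ne' (g k)
  · rw [hpartial]
    exact IsBigO.fun_sum fun k _ => by
      simpa using isBigO_atTop_mul_exp_div_sq_mul_sub_exp_spiral (r := r) (θs k - θ) ha (g k)
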